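/- Let y, c be rational numbers with y² = c⁴ − 8c³ + 12c² − 16c + 4, c ≠ 1, c ≠ 2, and set b = (c² + y − 2)/(4(c − 2)(c − 1)). Assume (b²c⁴ − 6b²c³ + 13b²c² − 12b²c + 4b² + c²)·(bc − 1 − b)·(bc − c − 2b) ≠ 0. Then E₀₃ = 0, where E₀₃ is given by the formula in the context; in particular d = 0 is a root of the cubic d³ − E₀₁d² + E₀₂d − E₀₃. -/

import Mathlib

/-!
The third factor of `E₀₃` is the quadratic `2u²b² − u(c² − 2)b + c(c² − 2c + 2)` in `b`, where
`u = (c − 1)(c − 2)`. Its discriminant, divided by `u²`, is `(c² − 2)² − 8c(c² − 2c + 2)`, which is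
exactly the right-hand side of the curve equation, so the point `(c, y)` makes
`b = (c² + y − 2)/(4u)` a root of it.
-/

theorem quadratic_factor_eq_zero_of_curve {K : Type*} [Field K] [CharZero K] (y c b : K)
    (hy : y^2 = c^4 - 8*c^3 + 12*c^2 - 16*c + 4)
    (hb : 4*(c - 2)*(c - 1) * b = c^2 + y - 2) :
    2*b^2*c^4 - 12*b^2*c^3 + 26*b^2*c^2 - 24*b^2*c + 8*b^2 - b*c^4 + 3*b*c^3
      - 6*b*c + 4*b + c^3 - 2*c^2 + 2*c = 0 := by
  have h8 : 8 * (2*b^2*c^4 - 12*b^2*c^3 + 26*b^2*c^2 - 24*b^2*c + 8*b^2 - b*c^4 + 3*b*c^3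
      - 6*b*c + 4*b + c^3 - 2*c^2 + 2*c) = 0 := by
    linear_combination (4*(c - 2)*(c - 1)*b - c^2 + 2 + y) * hb + hy
  simpa using h8

theorem stmt_10_general (y c b E03 : ℚ)
    (hy : y^2 = c^4 - 8*c^3 + 12*c^2 - 16*c + 4)
    (hc1 : c ≠ 1) (hc2 : c ≠ 2)
    (hb : b = (c^2 + y - 2) / (4*(c - 2)*(c - 1)))
    (hE03 : E03 = (b/2)
        * (b^2*c^4 - 5*b^2*c^3 + 10*b^2*c^2 - 10*b^2*c + 4*b^2 + 2*b*c + 2*c^2 - b*c^3)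
        * (2*b^2*c^4 - 12*b^2*c^3 + 26*b^2*c^2 - 24*b^2*c + 8*b^2 - b*c^4 + 3*b*c^3
            - 6*b*c + 4*b + c^3 - 2*c^2 + 2*c)
        * (b^2*c^4 - 6*b^2*c^3 + 13*b^2*c^2 - 12*b^2*c + 4*b^2 + c^2)⁻¹
        * ((b*c - 1 - b)^2)⁻¹ * ((b*c - c - 2*b)^2)⁻¹) :
    E03 = 0 := by
  have hu : 4*(c - 2)*(c - 1) ≠ 0 := by
    have := sub_ne_zero.mpr hc1
    have := sub_ne_zero.mpr hc2
    positivity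
  have hb' : 4*(c - 2)*(c - 1) * b = c^2 + y - 2 := by
    rw [hb, mul_div_cancel₀ _ hu]
  rw [hE03, quadratic_factor_eq_zero_of_curve y c b hy hb']
  ring

theorem stmt_10 (y c b E03 : ℚ)
    (hy : y^2 = c^4 - 8*c^3 + 12*c^2 - 16*c + 4)
    (hc1 : c ≠ 1) (hc2 : c ≠ 2)
    (hb : b = (c^2 + y - 2) / (4*(c - 2)*(c - 1)))
    (hnd : (b^2*c^4 - 6*b^2*c^3 + 13*b^2*c^2 - 12*b^2*c + 4*b^2 + c^2)
           * (b*c - 1 - b) * (b*c - c - 2*b) ≠ 0)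
    (hE03 : E03 = (b/2)
        * (b^2*c^4 - 5*b^2*c^3 + 10*b^2*c^2 - 10*b^2*c + 4*b^2 + 2*b*c + 2*c^2 - b*c^3)
        * (2*b^2*c^4 - 12*b^2*c^3 + 26*b^2*c^2 - 24*b^2*c + 8*b^2 - b*c^4 + 3*b*c^3
            - 6*b*c + 4*b + c^3 - 2*c^2 + 2*c)
        * (b^2*c^4 - 6*b^2*c^3 + 13*b^2*c^2 - 12*b^2*c + 4*b^2 + c^2)⁻¹
        * ((b*c - 1 - b)^2)⁻¹ * ((b*c - c - 2*b)^2)⁻¹) :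
    E03 = 0 :=
  stmt_10_general y c b E03 hy hc1 hc2 hb hE03
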